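/- Box insertion preserves solutions trivially: let B (the boxing function) be applied to term M with basis B, type Γ, critical points cpts, and constraints A, introducing fresh variables b, c_1, …, c_k and returning basis !^b B_1, type !^b Γ_1, constraints A_1. Then for any solution X of A, the extension X_1 = (X, b=0, c_1=0, …, c_k=0) is a solution of A_1, and moreover X_1(Γ_1) = X(Γ) and X_1(B_1) = X(B). -/
import Mathlib



/-- Formulas of Elementary Affine Logic: atoms, bang, linear implication. -/
inductive EALFormula where
  | atom (n : ℕ)
  | bang (A : EALFormula)
  | limp (A B : EALFormula)
deriving DecidableEq

/-- Simple types (with type variables). -/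
inductive SimpleType where
  | tvar (n : ℕ)
  | arrow (a b : SimpleType)
deriving DecidableEq

/-- `!^k A`. -/
def bangN : ℕ → EALFormula → EALFormula
  | 0, A => A
  | k + 1, A => .bang (bangN k A)

/-- Erasure of an EAL formula to a simple type. -/
def eraseF : EALFormula → SimpleType
  | .atom n => .tvar n
  | .bang A => eraseF A
  | .limp A B => .arrow (eraseF A) (eraseF B)

/-- Pure lambda terms with named (natural-number) variables. -/
inductive Lam where
  | var (x : ℕ)
  | lam (x : ℕ) (M : Lam)
  | app (M N : Lam)
deriving DecidableEq

/-- Naive substitution `M{N/x}` on pure lambda terms. -/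
def Lam.subst : Lam → ℕ → Lam → Lam
  | .var y, x, N => if y = x then N else .var y
  | .lam y M, x, N => if y = x then .lam y M else .lam y (M.subst x N)
  | .app M P, x, N => .app (M.subst x N) (P.subst x N)

/-- Iterated substitution. -/
def Lam.substList : Lam → List (ℕ × Lam) → Lam
  | M, [] => M
  | M, (x, N) :: rest => (M.subst x N).substList rest

/-- Simply typed lambda calculus. -/
inductive SimplyTyped : List (ℕ × SimpleType) → Lam → SimpleType → Prop where
  | var {Γ x σ} : (x, σ) ∈ Γ → SimplyTyped Γ (.var x) σ
  | lam {Γ x σ τ M} : SimplyTyped ((x, σ) :: Γ) M τ →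
      SimplyTyped Γ (.lam x M) (.arrow σ τ)
  | app {Γ M N σ τ} : SimplyTyped Γ M (.arrow σ τ) → SimplyTyped Γ N σ →
      SimplyTyped Γ (.app M N) τ

/-- The EAL sequent calculus with lambda-term annotations. -/
inductive EALDeriv : List (ℕ × EALFormula) → Lam → EALFormula → Prop where
  | ax {x A} : EALDeriv [(x, A)] (.var x) A
  | cut {Γ Δ x A B M N} : EALDeriv Γ N A → EALDeriv ((x, A) :: Δ) M B →
      EALDeriv (Γ ++ Δ) (M.subst x N) B
  | weak {Γ x A M B} : EALDeriv Γ M B → EALDeriv ((x, A) :: Γ) M B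
  | contr {Γ x₁ x₂ z A M B} :
      EALDeriv ((x₁, .bang A) :: (x₂, .bang A) :: Γ) M B →
      EALDeriv ((z, .bang A) :: Γ) ((M.subst x₁ (.var z)).subst x₂ (.var z)) B
  | limpR {Γ x A M B} : EALDeriv ((x, A) :: Γ) M B → EALDeriv Γ (.lam x M) (.limp A B)
  | limpL {Γ Δ f x A B C M N} : EALDeriv Γ N A → EALDeriv ((x, B) :: Δ) M C →
      EALDeriv ((f, .limp A B) :: (Γ ++ Δ)) (M.subst x (.app (.var f) N)) C
  | promote {Γ M B} : EALDeriv Γ M B →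
      EALDeriv (Γ.map fun p => (p.1, .bang p.2)) M (.bang B)


/-- Elementary affine terms: variables, abstraction, application,
promotion `!(M)[M₁/x₁,…,Mₙ/xₙ]` and contraction `[M]N = x,y`. -/
inductive ETerm where
  | var (x : ℕ)
  | lam (x : ℕ) (M : ETerm)
  | app (M N : ETerm)
  | promote (M : ETerm) (Ms : List ETerm) (xs : List ℕ)
  | contr (M N : ETerm) (x y : ℕ)

/-- Free variables of an elementary affine term. -/
def FV : ETerm → Finset ℕ
  | .var x => {x}
  | .lam x M => FV M \ {x}
  | .app M N => FV M ∪ FV N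
  | .promote M Ms xs =>
      (Ms.attach.foldr (fun m s => FV m.1 ∪ s) ∅) ∪ (FV M \ xs.toFinset)
  | .contr M N x y => (FV M \ {x, y}) ∪ FV N
decreasing_by
  all_goals simp_wf
  all_goals try omega
  all_goals (have := List.sizeOf_lt_of_mem m.2; omega)

/-- Number of free occurrences of `x` in an elementary affine term. -/
def occE (x : ℕ) : ETerm → ℕ
  | .var y => if y = x then 1 else 0
  | .lam y M => if y = x then 0 else occE x M
  | .app M N => occE x M + occE x N
  | .promote M Ms xs =>
      (Ms.attach.map fun m => occE x m.1).sum + (if x ∈ xs then 0 else occE x M)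
  | .contr M N y z => (if x = y ∨ x = z then 0 else occE x M) + occE x N
decreasing_by
  all_goals simp_wf
  all_goals try omega
  all_goals (have := List.sizeOf_lt_of_mem m.2; omega)

/-- Legal elementary affine terms (linearity conditions). -/
inductive Legal : ETerm → Prop where
  | var {x} : Legal (.var x)
  | lam {x M} : Legal M → Legal (.lam x M)
  | app {M N} : Legal M → Legal N → Disjoint (FV M) (FV N) → Legal (.app M N)
  | promote {M Ms xs} : Legal M → (∀ P ∈ Ms, Legal P) →
      FV M = xs.toFinset →
      (Ms.Pairwise fun P Q => Disjoint (FV P) (FV Q)) →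
      Legal (.promote M Ms xs)
  | contr {M N x y} : Legal M → Legal N → Disjoint (FV M) (FV N) →
      Legal (.contr M N x y)


/-- Substitution `M{N/x}` on elementary affine terms. -/
def substE (x : ℕ) (N : ETerm) : ETerm → ETerm
  | .var y => if y = x then N else .var y
  | .lam y M => if y = x then .lam y M else .lam y (substE x N M)
  | .app M P => .app (substE x N M) (substE x N P)
  | .promote M Ms xs =>
      if x ∈ xs then .promote M (Ms.attach.map fun m => substE x N m.1) xs
      else .promote (substE x N M) (Ms.attach.map fun m => substE x N m.1) xs
  | .contr M P y z =>
      if x = y ∨ x = z then .contr M (substE x N P) y z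
      else .contr (substE x N M) (substE x N P) y z
decreasing_by
  all_goals simp_wf
  all_goals try omega
  all_goals (have := List.sizeOf_lt_of_mem m.2; omega)


/-- Erasure of an elementary affine term to a pure lambda term. -/
def eraseT : ETerm → Lam
  | .var x => .var x
  | .lam x M => .lam x (eraseT M)
  | .app M N => .app (eraseT M) (eraseT N)
  | .promote M Ms xs =>
      (eraseT M).substList (xs.zip (Ms.attach.map fun m => eraseT m.1))
  | .contr M N x y => ((eraseT M).subst x (eraseT N)).subst y (eraseT N)
decreasing_by
  all_goals simp_wf
  all_goals try omega
  all_goals (have := List.sizeOf_lt_of_mem m.2; omega)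

/-- The length measure on elementary affine terms. -/
def Lterm : ETerm → ℕ
  | .var _ => 0
  | .lam _ M => 1 + Lterm M
  | .app M N => 1 + Lterm M + Lterm N
  | .promote M Ms _ => Lterm M + (Ms.attach.map fun m => Lterm m.1).sum
  | .contr M N _ _ => Lterm M + Lterm N
decreasing_by
  all_goals simp_wf
  all_goals try omega
  all_goals (have := List.sizeOf_lt_of_mem m.2; omega)

/-- The length measure on pure lambda terms. -/
def Llam : Lam → ℕ
  | .var _ => 0
  | .lam _ M => 1 + Llam M
  | .app M N => 1 + Llam M + Llam N


/-- Fold a list of contractions around a term: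
`contrFold R [(P₁,a₁,b₁),…]` is `[…[R]P₁=a₁,b₁ …]`. -/
def contrFold : ETerm → List (ETerm × ℕ × ℕ) → ETerm
  | R, [] => R
  | R, (P, a, b) :: rest => contrFold (.contr R P a b) rest

/-- Names of the reduction rules of NEAL. -/
inductive RuleName where
  | beta | dup | bangbang | appc | bangc | cc | lamc
deriving DecidableEq

/-- One-step reduction on elementary affine terms, labelled by the rule used,
and closed under all term contexts. -/
inductive Step : RuleName → ETerm → ETerm → Prop where
  | beta {x M N} : Step .beta (.app (.lam x M) N) (substE x N M)
  | dup {N M : ETerm} {Ms : List ETerm} {xs xs' ys' : List ℕ} {x y : ℕ}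
      (h1 : xs'.length = Ms.length) (h2 : ys'.length = Ms.length)
      (hnd : (xs' ++ ys').Nodup)
      (hfresh : ∀ a ∈ xs' ++ ys', a ∉ FV N ∪ FV (.promote M Ms xs)) :
      Step .dup (.contr N (.promote M Ms xs) x y)
        (contrFold
          (substE y (.promote M (ys'.map ETerm.var) xs)
            (substE x (.promote M (xs'.map ETerm.var) xs) N))
          (Ms.zip (xs'.zip ys')))
  | bangbang {M N : ETerm} {Ms₁ Ms₂ Ps : List ETerm} {xs₁ xs₂ ys : List ℕ} {xi : ℕ}
      (hlen : xs₁.length = Ms₁.length) :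
      Step .bangbang
        (.promote M (Ms₁ ++ .promote N Ps ys :: Ms₂) (xs₁ ++ xi :: xs₂))
        (.promote (substE xi N M) (Ms₁ ++ Ps ++ Ms₂) (xs₁ ++ ys ++ xs₂))
  | appcL {M M₁ N : ETerm} {x₁ x₂ x₁' x₂' : ℕ}
      (hf₁ : x₁' ∉ FV M ∪ FV N) (hf₂ : x₂' ∉ FV M ∪ FV N) (hne : x₁' ≠ x₂') :
      Step .appc (.app (.contr M M₁ x₁ x₂) N)
        (.contr (.app (substE x₂ (.var x₂') (substE x₁ (.var x₁') M)) N) M₁ x₁' x₂')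
  | appcR {M N N₁ : ETerm} {x₁ x₂ x₁' x₂' : ℕ}
      (hf₁ : x₁' ∉ FV M ∪ FV N) (hf₂ : x₂' ∉ FV M ∪ FV N) (hne : x₁' ≠ x₂') :
      Step .appc (.app M (.contr N N₁ x₁ x₂))
        (.contr (.app M (substE x₂ (.var x₂') (substE x₁ (.var x₁') N))) N₁ x₁' x₂')
  | bangc {M N P : ETerm} {Ms₁ Ms₂ : List ETerm} {xs : List ℕ} {y z y' z' : ℕ}
      (hf₁ : y' ∉ FV (ETerm.promote M (Ms₁ ++ P :: Ms₂) xs))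
      (hf₂ : z' ∉ FV (ETerm.promote M (Ms₁ ++ P :: Ms₂) xs)) (hne : y' ≠ z') :
      Step .bangc (.promote M (Ms₁ ++ .contr P N y z :: Ms₂) xs)
        (.contr (.promote M (Ms₁ ++ (substE z (.var z') (substE y (.var y') P)) :: Ms₂) xs)
          N y' z')
  | cc {M N P : ETerm} {x₁ x₂ y₁ y₂ y₁' y₂' : ℕ}
      (hf₁ : y₁' ∉ FV M ∪ FV N) (hf₂ : y₂' ∉ FV M ∪ FV N) (hne : y₁' ≠ y₂') :
      Step .cc (.contr M (.contr N P y₁ y₂) x₁ x₂)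
        (.contr (.contr M (substE y₂ (.var y₂') (substE y₁ (.var y₁') N)) x₁ x₂) P y₁' y₂')
  | lamc {M N : ETerm} {x y z : ℕ} (h : x ∉ FV N) :
      Step .lamc (.lam x (.contr M N y z)) (.contr (.lam x M) N y z)
  | lamCong {r x M M'} : Step r M M' → Step r (.lam x M) (.lam x M')
  | appCongL {r M M' N} : Step r M M' → Step r (.app M N) (.app M' N)
  | appCongR {r M N N'} : Step r N N' → Step r (.app M N) (.app M N')
  | promoteCongBody {r M M' Ms xs} : Step r M M' →
      Step r (.promote M Ms xs) (.promote M' Ms xs)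
  | promoteCongArg {r M P P' Ms₁ Ms₂ xs} : Step r P P' →
      Step r (.promote M (Ms₁ ++ P :: Ms₂) xs) (.promote M (Ms₁ ++ P' :: Ms₂) xs)
  | contrCongL {r M M' N x y} : Step r M M' → Step r (.contr M N x y) (.contr M' N x y)
  | contrCongR {r M N N' x y} : Step r N N' → Step r (.contr M N x y) (.contr M N' x y)

/-- The reduction relation `⇝`: reflexive-transitive closure of all the rules. -/
def Red : ETerm → ETerm → Prop :=
  Relation.ReflTransGen fun M N => ∃ r, Step r M N

/-- The subterm relation on elementary affine terms. -/
inductive Subterm : ETerm → ETerm → Prop where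
  | refl (M) : Subterm M M
  | lam {S M x} : Subterm S M → Subterm S (.lam x M)
  | appL {S M N} : Subterm S M → Subterm S (.app M N)
  | appR {S M N} : Subterm S N → Subterm S (.app M N)
  | promoteBody {S M Ms xs} : Subterm S M → Subterm S (.promote M Ms xs)
  | promoteArg {S M P Ms xs} : P ∈ Ms → Subterm S P → Subterm S (.promote M Ms xs)
  | contrL {S M N x y} : Subterm S M → Subterm S (.contr M N x y)
  | contrR {S M N x y} : Subterm S N → Subterm S (.contr M N x y)

/-- Domain of a basis. -/
def dom (Γ : List (ℕ × EALFormula)) : List ℕ := Γ.map Prod.fst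

/-- The NEAL term assignment system (natural deduction for EAL). -/
inductive NEALT : List (ℕ × EALFormula) → ETerm → EALFormula → Prop where
  | ax {Γ x A} : (x, A) ∈ Γ → NEALT Γ (.var x) A
  | contr {Γ Δ M N x y A B} :
      NEALT Γ M (.bang A) →
      NEALT ((x, .bang A) :: (y, .bang A) :: Δ) N B →
      (∀ z ∈ dom Γ, z ∉ dom Δ) →
      NEALT (Γ ++ Δ) (.contr N M x y) B
  | limpI {Γ x A M B} : NEALT ((x, A) :: Γ) M B → NEALT Γ (.lam x M) (.limp A B)
  | limpE {Γ Δ M N A B} :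
      NEALT Γ M (.limp A B) → NEALT Δ N A →
      (∀ z ∈ dom Γ, z ∉ dom Δ) →
      NEALT (Γ ++ Δ) (.app M N) B
  | promote {Γ : List (ℕ × EALFormula)} {Δs : List (List (ℕ × EALFormula))}
      {Ms : List ETerm} {xs : List ℕ} {As : List EALFormula} {N B}
      (h1 : Δs.length = Ms.length) (h2 : Ms.length = As.length)
      (h3 : xs.length = As.length)
      (hMs : ∀ i, i < Ms.length →
        NEALT (Δs.getD i []) (Ms.getD i (.var 0)) (.bang (As.getD i (.atom 0))))
      (hN : NEALT (xs.zip As) N B)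
      (hdisj : (Γ :: Δs).Pairwise fun Δ₁ Δ₂ => ∀ z ∈ dom Δ₁, z ∉ dom Δ₂) :
      NEALT (Γ ++ Δs.flatten) (.promote N Ms xs) (.bang B)


/-- Type-valued NEAL derivations (derivation trees). -/
inductive NEALD : List (ℕ × EALFormula) → ETerm → EALFormula → Type where
  | ax {Γ x A} : (x, A) ∈ Γ → NEALD Γ (.var x) A
  | contr {Γ Δ M N x y A B} :
      NEALD Γ M (.bang A) →
      NEALD ((x, .bang A) :: (y, .bang A) :: Δ) N B →
      (∀ z ∈ dom Γ, z ∉ dom Δ) →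
      NEALD (Γ ++ Δ) (.contr N M x y) B
  | limpI {Γ x A M B} : NEALD ((x, A) :: Γ) M B → NEALD Γ (.lam x M) (.limp A B)
  | limpE {Γ Δ M N A B} :
      NEALD Γ M (.limp A B) → NEALD Δ N A →
      (∀ z ∈ dom Γ, z ∉ dom Δ) →
      NEALD (Γ ++ Δ) (.app M N) B
  | promote {Γ : List (ℕ × EALFormula)} {Δs : List (List (ℕ × EALFormula))}
      {Ms : List ETerm} {xs : List ℕ} {As : List EALFormula} {N B}
      (h1 : Δs.length = Ms.length) (h2 : Ms.length = As.length)
      (h3 : xs.length = As.length)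
      (hMs : ∀ i, i < Ms.length →
        NEALD (Δs.getD i []) (Ms.getD i (.var 0)) (.bang (As.getD i (.atom 0))))
      (hN : NEALD (xs.zip As) N B)
      (hdisj : (Γ :: Δs).Pairwise fun Δ₁ Δ₂ => ∀ z ∈ dom Δ₁, z ∉ dom Δ₂) :
      NEALD (Γ ++ Δs.flatten) (.promote N Ms xs) (.bang B)

/-- Equality of derivations up to weakening (the unused part of the
context in axioms and in the anchor context of the promotion rule). -/
inductive DEquiv : ∀ {Γ₁ Γ₂ : List (ℕ × EALFormula)} {M : ETerm} {A : EALFormula},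
    NEALD Γ₁ M A → NEALD Γ₂ M A → Prop where
  | ax {Γ₁ Γ₂ x A} (h₁ : (x, A) ∈ Γ₁) (h₂ : (x, A) ∈ Γ₂) :
      DEquiv (NEALD.ax h₁) (NEALD.ax h₂)
  | contr {Γ Δ Γ' Δ' M N x y A B}
      {d₁ : NEALD Γ M (.bang A)} {d₁' : NEALD Γ' M (.bang A)}
      {d₂ : NEALD ((x, .bang A) :: (y, .bang A) :: Δ) N B}
      {d₂' : NEALD ((x, .bang A) :: (y, .bang A) :: Δ') N B}
      {h : ∀ z ∈ dom Γ, z ∉ dom Δ} {h' : ∀ z ∈ dom Γ', z ∉ dom Δ'} :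
      DEquiv d₁ d₁' → DEquiv d₂ d₂' →
      DEquiv (NEALD.contr d₁ d₂ h) (NEALD.contr d₁' d₂' h')
  | limpI {Γ Γ' x A M B} {d : NEALD ((x, A) :: Γ) M B} {d' : NEALD ((x, A) :: Γ') M B} :
      DEquiv d d' → DEquiv (NEALD.limpI d) (NEALD.limpI d')
  | limpE {Γ Δ Γ' Δ' M N A B}
      {d₁ : NEALD Γ M (.limp A B)} {d₁' : NEALD Γ' M (.limp A B)}
      {d₂ : NEALD Δ N A} {d₂' : NEALD Δ' N A}
      {h : ∀ z ∈ dom Γ, z ∉ dom Δ} {h' : ∀ z ∈ dom Γ', z ∉ dom Δ'} :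
      DEquiv d₁ d₁' → DEquiv d₂ d₂' →
      DEquiv (NEALD.limpE d₁ d₂ h) (NEALD.limpE d₁' d₂' h')
  | promote {Γ Γ' : List (ℕ × EALFormula)} {Δs Δs' : List (List (ℕ × EALFormula))}
      {Ms : List ETerm} {xs : List ℕ} {As : List EALFormula} {N B}
      {h1 : Δs.length = Ms.length} {h1' : Δs'.length = Ms.length}
      {h2 : Ms.length = As.length} {h3 : xs.length = As.length}
      {f : ∀ i, i < Ms.length →
        NEALD (Δs.getD i []) (Ms.getD i (.var 0)) (.bang (As.getD i (.atom 0)))}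
      {f' : ∀ i, i < Ms.length →
        NEALD (Δs'.getD i []) (Ms.getD i (.var 0)) (.bang (As.getD i (.atom 0)))}
      {hN : NEALD (xs.zip As) N B} {hN' : NEALD (xs.zip As) N B}
      {hd : (Γ :: Δs).Pairwise fun Δ₁ Δ₂ => ∀ z ∈ dom Δ₁, z ∉ dom Δ₂}
      {hd' : (Γ' :: Δs').Pairwise fun Δ₁ Δ₂ => ∀ z ∈ dom Δ₁, z ∉ dom Δ₂} :
      (∀ i (h : i < Ms.length), DEquiv (f i h) (f' i h)) →
      DEquiv hN hN' →
      DEquiv (NEALD.promote h1 h2 h3 f hN hd) (NEALD.promote h1' h2 h3 f' hN' hd')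

/-- NEAL on formulas only (natural deduction for EAL, list contexts). -/
inductive NEALF : List EALFormula → EALFormula → Prop where
  | ax {Γ A} : A ∈ Γ → NEALF Γ A
  | contr {Γ Δ A B} : NEALF Γ (.bang A) → NEALF (.bang A :: .bang A :: Δ) B →
      NEALF (Γ ++ Δ) B
  | limpI {Γ A B} : NEALF (A :: Γ) B → NEALF Γ (.limp A B)
  | limpE {Γ Δ A B} : NEALF Γ (.limp A B) → NEALF Δ A → NEALF (Γ ++ Δ) B
  | promote {Γ : List EALFormula} {Δs : List (List EALFormula)}
      {As : List EALFormula} {B}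
      (h : Δs.length = As.length)
      (hp : ∀ i, i < Δs.length → NEALF (Δs.getD i []) (.bang (As.getD i (.atom 0))))
      (hB : NEALF As B) : NEALF (Γ ++ Δs.flatten) (.bang B)

/-- The EAL sequent calculus on formulas, with multiset contexts. -/
inductive EALSeq : Multiset EALFormula → EALFormula → Prop where
  | ax {A} : EALSeq {A} A
  | cut {Γ Δ A B} : EALSeq Γ A → EALSeq (A ::ₘ Δ) B → EALSeq (Γ + Δ) B
  | weak {Γ A B} : EALSeq Γ B → EALSeq (A ::ₘ Γ) B
  | contr {Γ A B} : EALSeq (.bang A ::ₘ .bang A ::ₘ Γ) B → EALSeq (.bang A ::ₘ Γ) B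
  | limpR {Γ A B} : EALSeq (A ::ₘ Γ) B → EALSeq Γ (.limp A B)
  | limpL {Γ Δ A B C} : EALSeq Γ A → EALSeq (B ::ₘ Δ) C →
      EALSeq (.limp A B ::ₘ (Γ + Δ)) C
  | promote {Γ B} : EALSeq Γ B → EALSeq (Γ.map .bang) (.bang B)

/-- NEAL on formulas, with multiset contexts. -/
inductive NEALm : Multiset EALFormula → EALFormula → Prop where
  | ax {Γ A} : A ∈ Γ → NEALm Γ A
  | contr {Γ Δ A B} : NEALm Γ (.bang A) → NEALm (.bang A ::ₘ .bang A ::ₘ Δ) B →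
      NEALm (Γ + Δ) B
  | limpI {Γ A B} : NEALm (A ::ₘ Γ) B → NEALm Γ (.limp A B)
  | limpE {Γ Δ A B} : NEALm Γ (.limp A B) → NEALm Δ A → NEALm (Γ + Δ) B
  | promote {Γ : Multiset EALFormula} {Δs : List (Multiset EALFormula)}
      {As : List EALFormula} {B}
      (h : Δs.length = As.length)
      (hp : ∀ i, i < Δs.length → NEALm (Δs.getD i 0) (.bang (As.getD i (.atom 0))))
      (hB : NEALm (↑As) B) : NEALm (Γ + Δs.sum) (.bang B)


/-- General EAL-types: simple types decorated at every position with a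
formal sum of exponential variables. -/
inductive GType where
  | atom (n : ℕ) (ns : List ℕ)
  | limp (ns : List ℕ) (A B : GType)

/-- Instantiate the exponential variables of a general EAL-type. -/
def instG (X : ℕ → ℕ) : GType → EALFormula
  | .atom n ns => bangN ((ns.map X).sum) (.atom n)
  | .limp ns A B => bangN ((ns.map X).sum) (.limp (instG X A) (instG X B))

/-- Erasure of a general EAL-type to a simple type. -/
def gerase : GType → SimpleType
  | .atom n _ => .tvar n
  | .limp _ A B => .arrow (gerase A) (gerase B)

/-- The processing function `P`, threaded with a fresh-variable counter:
it puts one fresh exponential variable at every position of a simple type. -/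
def proc : SimpleType → ℕ → GType × ℕ
  | .tvar n, k => (.atom n [k], k + 1)
  | .arrow σ τ, k =>
      let r₁ := proc σ (k + 1)
      let r₂ := proc τ r₁.2
      (.limp [k] r₁.1 r₂.1, r₂.2)

/-- Prefix a general EAL-type with one more exponential variable. -/
def GType.bangVar (c : ℕ) : GType → GType
  | .atom n ns => .atom n (c :: ns)
  | .limp ns A B => .limp (c :: ns) A B

/-- The exponential variables occurring in a general EAL-type. -/
def GType.vars : GType → List ℕ
  | .atom _ ns => ns
  | .limp ns A B => ns ++ A.vars ++ B.vars

/-- A linear constraint `Σ pos − Σ neg = 0`. -/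
structure LinCon where
  pos : List ℕ
  neg : List ℕ

/-- Satisfaction of a linear constraint by an assignment. -/
def LinCon.sat (X : ℕ → ℕ) (c : LinCon) : Prop :=
  (c.pos.map X).sum = (c.neg.map X).sum

/-- A slice (combination of critical points): the indices of the constraints
it modifies and the free-variable occurrences it marks. -/
structure Slice where
  cons : List ℕ
  vars : List ℕ

/-- The boxing function `ℬ`: for each slice it introduces a fresh box variable
`c`, subtracts `c` from the constraints in the slice, and prefixes `!^c` to the
result type and to the basis variables not in the slice. -/
def boxAux : List (ℕ × GType) → GType → List Slice → List LinCon → ℕ →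
    List (ℕ × GType) × GType × List LinCon
  | B, Γ, [], A, _ => (B, Γ, A)
  | B, Γ, sl :: cpts, A, c =>
      boxAux (B.map fun p => (p.1, if p.1 ∈ sl.vars then p.2 else p.2.bangVar c))
        (Γ.bangVar c) cpts
        (A.mapIdx fun j con => if j ∈ sl.cons then ⟨con.pos, c :: con.neg⟩ else con)
        (c + 1)

/-- The boxing function `𝔹`: applies `ℬ` and then adds `b` boxes (a fresh
variable `b = c₀`) around the whole term. -/
def boxFun (B : List (ℕ × GType)) (Γ : GType) (cpts : List Slice) (A : List LinCon)
    (c₀ : ℕ) : List (ℕ × GType) × GType × List LinCon :=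
  let r := boxAux B Γ cpts A (c₀ + 1)
  (r.1.map fun p => (p.1, p.2.bangVar c₀), r.2.1.bangVar c₀, r.2.2)



/-- Substitution of simple types for type variables. -/
def SimpleType.substT (S : ℕ → SimpleType) : SimpleType → SimpleType
  | .tvar n => S n
  | .arrow a b => .arrow (a.substT S) (b.substT S)

/-- `σ` is the principal type schema of `M`. -/
def Principal (M : Lam) (σ : SimpleType) : Prop :=
  SimplyTyped [] M σ ∧ ∀ τ, SimplyTyped [] M τ → ∃ S, τ = σ.substT S

/-- Candidate elementary affine terms: legal, in non-β normal form, simple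
(contracting only variables and with `L(P) = L(P*)`), with both contracted
variables free in every contraction body, and with non-variable promotion
bodies. -/
def Candidate (P : ETerm) : Prop :=
  Legal P ∧
  (∀ r S S', r ≠ RuleName.beta → Subterm S P → ¬ Step r S S') ∧
  (∀ N Q x y, Subterm (.contr N Q x y) P → ∃ v, eraseT Q = Lam.var v) ∧
  Lterm P = Llam (eraseT P) ∧
  (∀ N Q x y, Subterm (.contr N Q x y) P → x ∈ FV N ∧ y ∈ FV N) ∧
  (∀ N Ms xs, Subterm (.promote N Ms xs) P → ∀ v, N ≠ .var v)

/-- `M` has an EAL type whose erasure is the simple type `τ`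
(i.e. `Γ ⊢_EAL M : C`, with contraction used only on variables,
via the main theorem on candidate terms). -/
def EALTypableAt (M : Lam) (τ : SimpleType) : Prop :=
  ∃ (P : ETerm) (Γ : List (ℕ × EALFormula)) (C : EALFormula),
    Candidate P ∧ NEALT Γ P C ∧ eraseT P = M ∧ eraseF C = τ



lemma instG_bangVar_zero (Y : ℕ → ℕ) (c : ℕ) (h : Y c = 0) (G : GType) :
    instG Y (G.bangVar c) = instG Y G := by
  cases G <;> simp [GType.bangVar, instG, h]

lemma instG_congr (Y Z : ℕ → ℕ) (G : GType) (h : ∀ v ∈ G.vars, Y v = Z v) :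
    instG Y G = instG Z G := by
  induction G with
  | atom n ns =>
      simp only [instG]
      rw [List.map_congr_left (fun v hv => h v (by simpa [GType.vars] using hv))]
  | limp ns A B ihA ihB =>
      simp only [instG]
      rw [List.map_congr_left (fun v hv => h v (by simp [GType.vars, hv])),
        ihA (fun v hv => h v (by simp [GType.vars, hv])),
        ihB (fun v hv => h v (by simp [GType.vars, hv]))]

lemma boxAux_sol (Y : ℕ → ℕ) (c₀ : ℕ) (hY : ∀ v, c₀ ≤ v → Y v = 0)
    (cpts : List Slice) :
    ∀ (B : List (ℕ × GType)) (Γ : GType) (A : List LinCon) (c : ℕ), c₀ ≤ c →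
    (∀ con ∈ A, con.sat Y) →
    (∀ con ∈ (boxAux B Γ cpts A c).2.2, con.sat Y) ∧
    instG Y (boxAux B Γ cpts A c).2.1 = instG Y Γ ∧
    (boxAux B Γ cpts A c).1.map (fun p => (p.1, instG Y p.2))
      = B.map fun p => (p.1, instG Y p.2) := by
  induction cpts with
  | nil => intro B Γ A c _ hsat; exact ⟨hsat, rfl, rfl⟩
  | cons sl cpts ih =>
      intro B Γ A c hc hsat
      have hYc : Y c = 0 := hY c hc
      simp only [boxAux]
      obtain ⟨h1, h2, h3⟩ := ih
        (B.map fun p => (p.1, if p.1 ∈ sl.vars then p.2 else p.2.bangVar c))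
        (Γ.bangVar c)
        (A.mapIdx fun j con => if j ∈ sl.cons then (⟨con.pos, c :: con.neg⟩ : LinCon) else con)
        (c + 1) (Nat.le_succ_of_le hc)
        (by
          intro con hcon
          rw [List.mem_mapIdx] at hcon
          obtain ⟨i, hi, rfl⟩ := hcon
          have hs := hsat A[i] (List.getElem_mem hi)
          split
          · simpa [LinCon.sat, hYc] using hs
          · exact hs)
      refine ⟨h1, ?_, ?_⟩
      · rw [h2, instG_bangVar_zero Y c hYc]
      · rw [h3, List.map_map]
        refine List.map_congr_left fun p _ => ?_
        simp only [Function.comp]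
        split
        · rfl
        · rw [instG_bangVar_zero Y c hYc]

/-- box insertion preserves solutions trivially: extending a
solution of the input constraints by `0` on the fresh box variables solves the
output constraints and leaves the instantiated type and basis unchanged. -/
theorem boxing_preserves_solutions (B : List (ℕ × GType)) (Γ : GType)
    (cpts : List Slice) (A : List LinCon) (c₀ : ℕ) (X : ℕ → ℕ)
    (hA : ∀ con ∈ A, ∀ v ∈ con.pos ++ con.neg, v < c₀)
    (hΓ : ∀ v ∈ Γ.vars, v < c₀)
    (hB : ∀ p ∈ B, ∀ v ∈ (Prod.snd p).vars, v < c₀)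
    (hX : ∀ con ∈ A, con.sat X) :
    (∀ con ∈ (boxFun B Γ cpts A c₀).2.2,
      con.sat fun v => if v < c₀ then X v else 0) ∧
    instG (fun v => if v < c₀ then X v else 0) (boxFun B Γ cpts A c₀).2.1
      = instG X Γ ∧
    (boxFun B Γ cpts A c₀).1.map
        (fun p => (p.1, instG (fun v => if v < c₀ then X v else 0) p.2))
      = B.map fun p => (p.1, instG X p.2) := by
  set Y : ℕ → ℕ := fun v => if v < c₀ then X v else 0 with hYdef
  have hY0 : ∀ v, c₀ ≤ v → Y v = 0 := by intro v hv; simp [hYdef, Nat.not_lt.mpr hv]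
  obtain ⟨h1, h2, h3⟩ := boxAux_sol Y c₀ hY0 cpts B Γ A (c₀ + 1) (by omega)
    (by
      intro con hcon
      have := hX con hcon
      have hv := hA con hcon
      simp only [hYdef]
      simp only [LinCon.sat] at this ⊢
      rw [List.map_congr_left (g := X) fun v hvv => by
          simp [hv v (List.mem_append_left _ hvv)],
        List.map_congr_left (l := con.neg) (g := X) fun v hvv => by
          simp [hv v (List.mem_append_right _ hvv)]]
      exact this)
  have hYc₀ : Y c₀ = 0 := hY0 c₀ le_rfl
  refine ⟨h1, ?_, ?_⟩
  · show instG Y ((boxAux B Γ cpts A (c₀ + 1)).2.1.bangVar c₀) = instG X Γ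
    rw [instG_bangVar_zero Y c₀ hYc₀, h2]
    exact instG_congr Y X Γ fun v hv => by simp [hYdef, hΓ v hv]
  · show ((boxAux B Γ cpts A (c₀ + 1)).1.map fun p => (p.1, p.2.bangVar c₀)).map
        (fun p => (p.1, instG Y p.2)) = _
    rw [List.map_map]
    have : ((fun p : ℕ × GType => (p.1, instG Y p.2)) ∘ fun p => (p.1, p.2.bangVar c₀))
        = fun p : ℕ × GType => (p.1, instG Y p.2) := by
      funext p; simp [Function.comp, instG_bangVar_zero Y c₀ hYc₀]
    rw [this, h3]
    refine List.map_congr_left fun p hp => ?_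
    rw [instG_congr Y X p.2 fun v hv => by simp [hYdef, hB p hp v hv]]
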